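/- A scalar-valued spectral function J(X) = φ(Λ_X), where Λ_X ∈ ℝ^n is the vector of singular values of X ∈ ℝ^{n₁×n₂} (n = min(n₁,n₂)) and φ : ℝ^n → ℝ ∪ {∞} is a proper lower semi-continuous symmetric function (φ(PΛ) = φ(Λ) for every permutation matrix P) extended by φ(Λ) = φ(|Λ|), is convex if and only if φ is convex. -/

import Mathlib

open Matrix

/-!
Convexity of `J` gives convexity of `φ` by restricting `J` to rectangular diagonal matrices, which
are their own singular value decompositions up to signs.

Conversely, write `aX + bY = W diag(τ) Tᵀ`. Then `τ` is the diagonal of `Wᵀ (aX + bY) T`, the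
convex combination of the diagonals of `Wᵀ X T` and `Wᵀ Y T`, so it suffices to show
`φ(diag(A diag(Λ) Bᵀ)) ≤ φ(Λ)` for orthogonal `A`, `B` and `Λ ≥ 0`. The `i`-th diagonal entry
`∑ₖ A_ik B_ik Λ_k` is bounded in absolute value by `∑ₖ ½ (A_ik² + B_ik²) Λ_k`. As `A ⊙ A` and
`B ⊙ B` are doubly stochastic, Birkhoff's theorem makes this bound an average of vectors dominated
by permutations of `Λ`. A convex function invariant under permutations and sign changes has
convex sublevel sets and is monotone in `|x|`, which concludes.
-/

/-- The rectangular `n₁ × n₂` matrix with the vector `Λ ∈ ℝ^{min n₁ n₂}` on its main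
diagonal and `0` elsewhere. -/
noncomputable def rectDiag {n₁ n₂ : ℕ} (Λ : Fin (min n₁ n₂) → ℝ) :
    Matrix (Fin n₁) (Fin n₂) ℝ :=
  Matrix.of fun i j =>
    if h : (i : ℕ) = (j : ℕ) ∧ (i : ℕ) < min n₁ n₂ then Λ ⟨(i : ℕ), h.2⟩ else 0

/-- `(V, Λ, U)` is a (full) singular value decomposition of `X ∈ ℝ^{n₁ × n₂}`:
`V`, `U` are orthogonal, `Λ` is the vector of nonnegative singular values, and
`X = V diag(Λ) Uᵀ`. -/
noncomputable def IsSVD {n₁ n₂ : ℕ} (X : Matrix (Fin n₁) (Fin n₂) ℝ)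
    (V : Matrix (Fin n₁) (Fin n₁) ℝ) (Λ : Fin (min n₁ n₂) → ℝ)
    (U : Matrix (Fin n₂) (Fin n₂) ℝ) : Prop :=
  Vᵀ * V = 1 ∧ V * Vᵀ = 1 ∧ Uᵀ * U = 1 ∧ U * Uᵀ = 1 ∧ (∀ i, 0 ≤ Λ i) ∧
    X = V * rectDiag Λ * Uᵀ

/-- Convexity for an extended-real-valued function on a real vector space. -/
def ERealConvex {E : Type*} [AddCommGroup E] [Module ℝ E] (f : E → EReal) : Prop :=
  ∀ x y : E, ∀ a b : ℝ, 0 ≤ a → 0 ≤ b → a + b = 1 →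
    f (a • x + b • y) ≤ (a : EReal) * f x + (b : EReal) * f y

open Module InnerProductSpace

namespace ERealConvex

variable {E : Type*} [AddCommGroup E] [Module ℝ E] {f : E → EReal}

theorem convex_le (hf : ERealConvex f) (C : EReal) : Convex ℝ {x | f x ≤ C} := by
  intro x hx y hy a b ha hb hab
  have ha' : (0 : EReal) ≤ a := EReal.coe_nonneg.mpr ha
  have hb' : (0 : EReal) ≤ b := EReal.coe_nonneg.mpr hb
  calc f (a • x + b • y) ≤ a * f x + b * f y := hf x y a b ha hb hab
    _ ≤ a * C + b * C := add_le_add (mul_le_mul_of_nonneg_left hx ha')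
        (mul_le_mul_of_nonneg_left hy hb')
    _ = C := by
      rw [← EReal.right_distrib_of_nonneg ha' hb', ← EReal.coe_add, hab, EReal.coe_one, one_mul]

theorem apply_le_of_abs_le {ι : Type*} [Fintype ι] {φ : (ι → ℝ) → EReal}
    (hφ : ERealConvex φ) (habs : ∀ Λ : ι → ℝ, φ (fun i => |Λ i|) = φ Λ)
    {x y : ι → ℝ} (hxy : ∀ i, |x i| ≤ y i) : φ x ≤ φ y := by
  classical
  suffices key : ∀ s : Finset ι, ∀ x : ι → ℝ, (∀ i, |x i| ≤ y i) → (∀ i ∉ s, x i = y i) →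
      φ x ≤ φ y from key Finset.univ x hxy (by simp)
  intro s
  induction s using Finset.induction with
  | empty =>
    intro x _ hx
    rw [show x = y from funext fun i => hx i (Finset.notMem_empty i)]
  | insert a s ha ih =>
    intro x hxy hx
    have hxp : φ (Function.update x a (y a)) ≤ φ y := by
      refine ih _ (fun i => ?_) (fun i hi => ?_) <;> rcases eq_or_ne i a with rfl | hia
      · simpa using abs_of_nonneg ((abs_nonneg _).trans (hxy i)) |>.le
      · simpa [hia] using hxy i
      · simp
      · simpa [hia] using hx i (by simp [hia, hi])
    have hxm : φ (Function.update x a (-y a)) ≤ φ y := by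
      convert hxp using 1
      rw [← habs, ← habs (Function.update x a (y a))]
      congr 1 with i
      rcases eq_or_ne i a with rfl | hia <;> simp [*]
    obtain ⟨p, q, hp, hq, hpq, hxa⟩ : x a ∈ segment ℝ (-y a) (y a) := by
      rw [segment_eq_Icc (neg_le_self ((abs_nonneg _).trans (hxy a)))]
      exact abs_le.mp (hxy a)
    have hcomb : x = p • Function.update x a (-y a) + q • Function.update x a (y a) := by
      ext i
      rcases eq_or_ne i a with rfl | hia
      · simpa using hxa.symm
      · simp [hia, ← add_mul, hpq]
    rw [hcomb]
    exact hφ.convex_le _ hxm hxp hp hq hpq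

end ERealConvex

theorem Function.Embedding.exists_perm_apply_eq_of_mem_range {ι κ : Type*} [Finite ι]
    (e : ι ↪ κ) {g : ι → κ} (hg : Function.Injective g) :
    ∃ π : Equiv.Perm ι, ∀ i, g i ∈ Set.range e → e (π i) = g i := by
  let g' : {i // g i ∈ Set.range e} → ι := fun i => i.2.choose
  have hg' : ∀ i, e (g' i) = g i := fun i => i.2.choose_spec
  have hg'_inj : Function.Injective g' := fun i j hij =>
    Subtype.ext (hg (by rw [← hg' i, ← hg' j, hij]))
  obtain ⟨π, hπ⟩ := Equiv.Perm.exists_extending_pair _ _ Subtype.val_injective hg'_inj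
  exact ⟨π, fun i hi => by rw [hπ ⟨i, hi⟩, hg']⟩

theorem Matrix.mulVec_extend_zero_apply {ι κ τ : Type*} [Fintype ι] [Fintype κ]
    (M : Matrix τ κ ℝ) (e : ι ↪ κ) (v : ι → ℝ) (r : τ) :
    (M *ᵥ Function.extend e v 0) r = ∑ k, M r (e k) * v k := by
  rw [mulVec, dotProduct]
  refine (Fintype.sum_of_injective e e.injective _ _ (fun s hs => ?_) (fun k => ?_)).symm
  · rw [Function.extend_apply' _ _ _ (by simpa using hs), Pi.zero_apply, mul_zero]
  · rw [e.injective.extend_apply]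

theorem Matrix.hadamard_self_mem_doublyStochastic {n : Type*} [Fintype n] [DecidableEq n]
    {A : Matrix n n ℝ} (hA : A ∈ orthogonalGroup n ℝ) : A ⊙ A ∈ doublyStochastic ℝ n := by
  refine mem_doublyStochastic_iff_sum.mpr ⟨fun i j => mul_self_nonneg _, fun i => ?_, fun j => ?_⟩
  · simpa [mul_apply] using congr_fun₂ ((mem_orthogonalGroup_iff n ℝ).mp hA) i i
  · simpa [mul_apply] using congr_fun₂ ((mem_orthogonalGroup_iff' n ℝ).mp hA) j j

theorem Matrix.transpose_mem_orthogonalGroup {n : Type*} [Fintype n] [DecidableEq n]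
    {A : Matrix n n ℝ} (hA : A ∈ orthogonalGroup n ℝ) : Aᵀ ∈ orthogonalGroup n ℝ := by
  rw [mem_orthogonalGroup_iff, transpose_transpose]
  exact (mem_orthogonalGroup_iff' n ℝ).mp hA

theorem ERealConvex.apply_mulVec_extend_zero_le {ι κ : Type*} [Fintype ι] [Fintype κ]
    [DecidableEq κ] {φ : (ι → ℝ) → EReal} (hφ : ERealConvex φ)
    (hsym : ∀ (σ : Equiv.Perm ι) (Λ : ι → ℝ), φ (fun i => Λ (σ i)) = φ Λ)
    (habs : ∀ Λ : ι → ℝ, φ (fun i => |Λ i|) = φ Λ) (e : ι ↪ κ) {S : Matrix κ κ ℝ}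
    (hS : S ∈ doublyStochastic ℝ κ) {Λ : ι → ℝ} (hΛ : 0 ≤ Λ) :
    φ (fun i => (S *ᵥ Function.extend e Λ 0) (e i)) ≤ φ Λ := by
  set T := {S : Matrix κ κ ℝ | φ (fun i => (S *ᵥ Function.extend e Λ 0) (e i)) ≤ φ Λ}
  have hT : Convex ℝ T := (hφ.convex_le _).is_linear_preimage
    ⟨fun S S' => by ext; simp [add_mulVec], fun c S => by ext; simp [smul_mulVec]⟩
  have hperm : ∀ σ : Equiv.Perm κ, σ.permMatrix ℝ ∈ T := by
    intro σ
    obtain ⟨π, hπ⟩ := e.exists_perm_apply_eq_of_mem_range (σ.injective.comp e.injective)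
    calc φ (fun i => (σ.permMatrix ℝ *ᵥ Function.extend e Λ 0) (e i))
        ≤ φ (fun i => Λ (π i)) := by
          refine hφ.apply_le_of_abs_le habs fun i => ?_
          rw [permMatrix_mulVec, Function.comp_apply]
          by_cases hi : σ (e i) ∈ Set.range e
          · rw [← show e (π i) = σ (e i) from hπ i hi, e.injective.extend_apply,
              abs_of_nonneg (hΛ _)]
          · rw [Function.extend_apply' _ _ _ (by simpa using hi), Pi.zero_apply, abs_zero]
            exact hΛ _
      _ = φ Λ := hsym π Λ
  rw [← SetLike.mem_coe, doublyStochastic_eq_convexHull_permMatrix] at hS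
  exact convexHull_min (by rintro _ ⟨σ, rfl⟩; exact hperm σ) hT hS

section RectDiag

variable {n₁ n₂ : ℕ}

def rectDiagEntries (X : Matrix (Fin n₁) (Fin n₂) ℝ) : Fin (min n₁ n₂) → ℝ :=
  fun k => X (Fin.castLE (min_le_left n₁ n₂) k) (Fin.castLE (min_le_right n₁ n₂) k)

theorem rectDiagEntries_rectDiag (Λ : Fin (min n₁ n₂) → ℝ) :
    rectDiagEntries (rectDiag Λ : Matrix (Fin n₁) (Fin n₂) ℝ) = Λ :=
  funext fun k => dif_pos ⟨rfl, k.isLt⟩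

theorem rectDiag_add_smul (a b : ℝ) (Λ Λ' : Fin (min n₁ n₂) → ℝ) :
    (rectDiag (a • Λ + b • Λ') : Matrix (Fin n₁) (Fin n₂) ℝ) =
      a • rectDiag Λ + b • rectDiag Λ' := by
  ext i j
  simp only [rectDiag, of_apply, Matrix.add_apply, Matrix.smul_apply]
  split_ifs <;> simp

theorem diagonal_mul_rectDiag (d : Fin n₁ → ℝ) (Λ : Fin (min n₁ n₂) → ℝ) :
    diagonal d * (rectDiag Λ : Matrix (Fin n₁) (Fin n₂) ℝ) =
      rectDiag fun k => d (Fin.castLE (min_le_left n₁ n₂) k) * Λ k := by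
  ext i j
  simp only [diagonal_mul, rectDiag, of_apply]
  split_ifs <;> simp

theorem mul_rectDiag_apply_castLE {ι : Type*} (A : Matrix ι (Fin n₁) ℝ)
    (Λ : Fin (min n₁ n₂) → ℝ) (r : ι) (k : Fin (min n₁ n₂)) :
    (A * rectDiag Λ) r (Fin.castLE (min_le_right n₁ n₂) k) =
      A r (Fin.castLE (min_le_left n₁ n₂) k) * Λ k := by
  rw [mul_apply, Finset.sum_eq_single (Fin.castLE (min_le_left n₁ n₂) k)]
  · rw [rectDiag, of_apply, dif_pos ⟨rfl, k.isLt⟩]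
    rfl
  · intro i _ hi
    rw [rectDiag, of_apply, dif_neg fun h => hi (Fin.ext h.1), mul_zero]
  · simp

theorem mul_rectDiag_apply_of_le {ι : Type*} (A : Matrix ι (Fin n₁) ℝ)
    (Λ : Fin (min n₁ n₂) → ℝ) (r : ι) {s : Fin n₂} (hs : min n₁ n₂ ≤ s) :
    (A * rectDiag Λ) r s = 0 := by
  rw [mul_apply]
  refine Fintype.sum_eq_zero _ fun i => ?_
  rw [rectDiag, of_apply, dif_neg fun h => (h.1 ▸ h.2).not_ge hs, mul_zero]

theorem mul_rectDiag_mul_transpose_apply {ι κ : Type*} (A : Matrix ι (Fin n₁) ℝ)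
    (Λ : Fin (min n₁ n₂) → ℝ) (B : Matrix κ (Fin n₂) ℝ) (r : ι) (t : κ) :
    (A * rectDiag Λ * Bᵀ) r t = ∑ k, A r (Fin.castLE (min_le_left n₁ n₂) k) * Λ k *
      B t (Fin.castLE (min_le_right n₁ n₂) k) := by
  rw [mul_apply]
  refine (Fintype.sum_of_injective _ (Fin.castLE_injective (min_le_right n₁ n₂)) _ _
    (fun s hs => ?_) (fun k => ?_)).symm
  · rw [mul_rectDiag_apply_of_le _ _ _ (not_lt.mp fun h => hs ⟨⟨s, h⟩, rfl⟩), zero_mul]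
  · rw [mul_rectDiag_apply_castLE, transpose_apply]

theorem isSVD_iff {X : Matrix (Fin n₁) (Fin n₂) ℝ} {V : Matrix (Fin n₁) (Fin n₁) ℝ}
    {Λ : Fin (min n₁ n₂) → ℝ} {U : Matrix (Fin n₂) (Fin n₂) ℝ} :
    IsSVD X V Λ U ↔ V ∈ orthogonalGroup (Fin n₁) ℝ ∧ U ∈ orthogonalGroup (Fin n₂) ℝ ∧
      0 ≤ Λ ∧ X = V * rectDiag Λ * Uᵀ := by
  rw [IsSVD, mem_orthogonalGroup_iff', mem_orthogonalGroup_iff', Pi.le_def]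
  constructor
  · rintro ⟨hV, -, hU, -, hΛ, hX⟩
    exact ⟨hV, hU, hΛ, hX⟩
  · rintro ⟨hV, hU, hΛ, hX⟩
    exact ⟨hV, mul_eq_one_comm.mp hV, hU, mul_eq_one_comm.mp hU, hΛ, hX⟩

theorem IsSVD.rectDiagEntries_transpose_mul_mul {X : Matrix (Fin n₁) (Fin n₂) ℝ}
    {V : Matrix (Fin n₁) (Fin n₁) ℝ} {Λ : Fin (min n₁ n₂) → ℝ} {U : Matrix (Fin n₂) (Fin n₂) ℝ}
    (hX : IsSVD X V Λ U) : rectDiagEntries (Vᵀ * X * U) = Λ := by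
  obtain ⟨hV, -, hU, -, -, rfl⟩ := hX
  rw [← Matrix.mul_assoc, ← Matrix.mul_assoc, hV, Matrix.one_mul, Matrix.mul_assoc, hU,
    Matrix.mul_one, rectDiagEntries_rectDiag]

end RectDiag

theorem ERealConvex.apply_rectDiagEntries_le {n₁ n₂ : ℕ}
    {φ : (Fin (min n₁ n₂) → ℝ) → EReal} (hφ : ERealConvex φ)
    (hsym : ∀ (σ : Equiv.Perm (Fin (min n₁ n₂))) (Λ : Fin (min n₁ n₂) → ℝ),
      φ (fun i => Λ (σ i)) = φ Λ)
    (habs : ∀ Λ : Fin (min n₁ n₂) → ℝ, φ (fun i => |Λ i|) = φ Λ)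
    {A : Matrix (Fin n₁) (Fin n₁) ℝ} {B : Matrix (Fin n₂) (Fin n₂) ℝ}
    (hA : A ∈ orthogonalGroup (Fin n₁) ℝ) (hB : B ∈ orthogonalGroup (Fin n₂) ℝ)
    {Λ : Fin (min n₁ n₂) → ℝ} (hΛ : 0 ≤ Λ) :
    φ (rectDiagEntries (A * rectDiag Λ * Bᵀ)) ≤ φ Λ := by
  set e₁ := Fin.castLEEmb (min_le_left n₁ n₂)
  set e₂ := Fin.castLEEmb (min_le_right n₁ n₂)
  set y₁ := fun i => ((A ⊙ A) *ᵥ Function.extend e₁ Λ 0) (e₁ i)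
  set y₂ := fun i => ((B ⊙ B) *ᵥ Function.extend e₂ Λ 0) (e₂ i)
  have hy₁ : φ y₁ ≤ φ Λ := hφ.apply_mulVec_extend_zero_le hsym habs e₁
    (hadamard_self_mem_doublyStochastic hA) hΛ
  have hy₂ : φ y₂ ≤ φ Λ := hφ.apply_mulVec_extend_zero_le hsym habs e₂
    (hadamard_self_mem_doublyStochastic hB) hΛ
  have amgm : ∀ a b c : ℝ, 0 ≤ c → |a * c * b| ≤ 1 / 2 * (a * a * c) + 1 / 2 * (b * b * c) := by
    intro a b c hc
    rw [abs_mul, abs_mul, abs_of_nonneg hc]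
    nlinarith [two_mul_le_add_sq |a| |b|, sq_abs a, sq_abs b]
  have hdom : ∀ i, |rectDiagEntries (A * rectDiag Λ * Bᵀ) i| ≤
      ((1 / 2 : ℝ) • y₁ + (1 / 2 : ℝ) • y₂) i := by
    intro i
    simp only [rectDiagEntries, mul_rectDiag_mul_transpose_apply, y₁, y₂, Pi.add_apply,
      Pi.smul_apply, smul_eq_mul, mulVec_extend_zero_apply, hadamard_apply, Finset.mul_sum,
      ← Finset.sum_add_distrib]
    exact (Finset.abs_sum_le_sum_abs _ _).trans
      (Finset.sum_le_sum fun k _ => amgm _ _ _ (hΛ k))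
  calc φ (rectDiagEntries (A * rectDiag Λ * Bᵀ))
      ≤ φ ((1 / 2 : ℝ) • y₁ + (1 / 2 : ℝ) • y₂) := hφ.apply_le_of_abs_le habs hdom
    _ ≤ φ Λ := hφ.convex_le (φ Λ) hy₁ hy₂ (by norm_num) (by norm_num) (by norm_num)

theorem ERealConvex.apply_rectDiagEntries_transpose_mul_mul_le {n₁ n₂ : ℕ}
    {φ : (Fin (min n₁ n₂) → ℝ) → EReal} (hφ : ERealConvex φ)
    (hsym : ∀ (σ : Equiv.Perm (Fin (min n₁ n₂))) (Λ : Fin (min n₁ n₂) → ℝ),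
      φ (fun i => Λ (σ i)) = φ Λ)
    (habs : ∀ Λ : Fin (min n₁ n₂) → ℝ, φ (fun i => |Λ i|) = φ Λ)
    {X : Matrix (Fin n₁) (Fin n₂) ℝ} {V : Matrix (Fin n₁) (Fin n₁) ℝ} {Λ : Fin (min n₁ n₂) → ℝ}
    {U : Matrix (Fin n₂) (Fin n₂) ℝ} (hX : IsSVD X V Λ U) {W : Matrix (Fin n₁) (Fin n₁) ℝ}
    {T : Matrix (Fin n₂) (Fin n₂) ℝ} (hW : W ∈ orthogonalGroup (Fin n₁) ℝ)
    (hT : T ∈ orthogonalGroup (Fin n₂) ℝ) :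
    φ (rectDiagEntries (Wᵀ * X * T)) ≤ φ Λ := by
  obtain ⟨hV, hU, hΛ, rfl⟩ := isSVD_iff.mp hX
  have hconj : Wᵀ * (V * rectDiag Λ * Uᵀ) * T = (Wᵀ * V) * rectDiag Λ * (Tᵀ * U)ᵀ := by
    simp only [Matrix.mul_assoc, transpose_mul, transpose_transpose]
  rw [hconj]
  exact hφ.apply_rectDiagEntries_le hsym habs (mul_mem (transpose_mem_orthogonalGroup hW) hV)
    (mul_mem (transpose_mem_orthogonalGroup hT) hU) hΛ

section SVD

variable {E F : Type*} [NormedAddCommGroup E] [InnerProductSpace ℝ E] [FiniteDimensional ℝ E]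
  [NormedAddCommGroup F] [InnerProductSpace ℝ F] [FiniteDimensional ℝ F]

theorem LinearMap.exists_orthonormalBasis_map_orthogonal {n : ℕ} (hn : finrank ℝ E = n)
    (L : E →ₗ[ℝ] F) :
    ∃ b : OrthonormalBasis (Fin n) ℝ E,
      Pairwise (fun i j => ⟪L (b i), L (b j)⟫_ℝ = 0) ∧ Antitone fun i => ‖L (b i)‖ := by
  have hT : (L.adjoint ∘ₗ L).IsSymmetric := fun x y => by
    rw [comp_apply, comp_apply, adjoint_inner_left, adjoint_inner_right]
  set b := hT.eigenvectorBasis hn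
  have hinner : ∀ i j, ⟪L (b i), L (b j)⟫_ℝ = hT.eigenvalues hn j * ⟪b i, b j⟫_ℝ := by
    intro i j
    rw [← adjoint_inner_right, ← comp_apply, hT.apply_eigenvectorBasis, RCLike.ofReal_real_eq_id,
      id_eq, real_inner_smul_right]
  have hsq : ∀ i, ‖L (b i)‖ ^ 2 = hT.eigenvalues hn i := fun i => by
    rw [← real_inner_self_eq_norm_sq, hinner, real_inner_self_eq_norm_sq, b.orthonormal.1 i,
      one_pow, mul_one]
  refine ⟨b, fun i j hij => ?_, fun i j hij => ?_⟩
  · simp only [hinner, b.orthonormal.2 hij, mul_zero]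
  · rw [← pow_le_pow_iff_left₀ (norm_nonneg _) (norm_nonneg _) two_ne_zero, hsq, hsq]
    exact hT.eigenvalues_antitone hn hij

theorem lt_finrank_of_pairwise_inner_eq_zero {n : ℕ} {y : Fin n → F}
    (horth : Pairwise (fun i j => ⟪y i, y j⟫_ℝ = 0)) (hanti : Antitone fun i => ‖y i‖)
    {j : Fin n} (hj : y j ≠ 0) : (j : ℕ) < finrank ℝ F := by
  have hne : ∀ k : Fin (j + 1), y (Fin.castLE j.isLt k) ≠ 0 := fun k =>
    norm_pos_iff.mp ((norm_pos_iff.mpr hj).trans_le (hanti (Nat.lt_succ_iff.mp k.isLt)))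
  have hli := linearIndependent_of_ne_zero_of_inner_eq_zero hne
    fun k k' hkk' => horth ((Fin.castLE_injective j.isLt).ne hkk')
  simpa using hli.fintype_card_le_finrank

theorem exists_orthonormalBasis_eq_norm_smul {ι : Type*} [Fintype ι]
    (hcard : finrank ℝ F = Fintype.card ι) {w : ι → F}
    (horth : Pairwise (fun i j => ⟪w i, w j⟫_ℝ = 0)) :
    ∃ b : OrthonormalBasis ι ℝ F, ∀ i, w i = ‖w i‖ • b i := by
  have hv : Orthonormal ℝ ({i | w i ≠ 0}.domRestrict fun i => ‖w i‖⁻¹ • w i) := by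
    refine ⟨fun i => norm_smul_inv_norm i.2, fun i j hij => ?_⟩
    simp only [Set.domRestrict_apply, real_inner_smul_left, real_inner_smul_right,
      horth (Subtype.coe_injective.ne hij), mul_zero]
  obtain ⟨b, hb⟩ := hv.exists_orthonormalBasis_extension_of_card_eq hcard
  refine ⟨b, fun i => ?_⟩
  by_cases hi : w i = 0
  · simp [hi]
  · rw [hb i hi, smul_inv_smul₀ (norm_ne_zero_iff.mpr hi)]

theorem exists_isSVD {n₁ n₂ : ℕ} (X : Matrix (Fin n₁) (Fin n₂) ℝ) : ∃ V Λ U, IsSVD X V Λ U := by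
  obtain ⟨b, horth, hanti⟩ :=
    (toEuclideanLin X).exists_orthonormalBasis_map_orthogonal finrank_euclideanSpace_fin
  set y := fun j => toEuclideanLin X (b j)
  have hy : ∀ j : Fin n₂, y j ≠ 0 → (j : ℕ) < n₁ := fun j hj => by
    simpa using lt_finrank_of_pairwise_inner_eq_zero horth hanti hj
  set w : Fin n₁ → EuclideanSpace ℝ (Fin n₁) :=
    fun i => if h : (i : ℕ) < n₂ then y ⟨i, h⟩ else 0
  have hw : Pairwise fun i i' => ⟪w i, w i'⟫_ℝ = 0 := by
    intro i i' hii'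
    simp only [w]
    split_ifs
    · exact horth fun h => hii' (Fin.ext (Fin.mk.inj_iff.mp h))
    all_goals simp
  obtain ⟨b', hb'⟩ := exists_orthonormalBasis_eq_norm_smul (by simp) hw
  set U := (EuclideanSpace.basisFun (Fin n₂) ℝ).toBasis.toMatrix b
  set V := (EuclideanSpace.basisFun (Fin n₁) ℝ).toBasis.toMatrix b'
  have hU := (EuclideanSpace.basisFun (Fin n₂) ℝ).toMatrix_orthonormalBasis_mem_orthogonal b
  have hV := (EuclideanSpace.basisFun (Fin n₁) ℝ).toMatrix_orthonormalBasis_mem_orthogonal b'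
  set Λ := fun k => ‖y (Fin.castLE (min_le_right n₁ n₂) k)‖
  have hXU : X * U = V * rectDiag Λ := by
    ext r j
    rw [show (X * U) r j = y j r by
      simp [y, U, mul_apply, toLpLin_apply, mulVec, dotProduct, Module.Basis.toMatrix_apply]]
    by_cases hj : (j : ℕ) < min n₁ n₂
    · obtain ⟨k, rfl⟩ : ∃ k, Fin.castLE (min_le_right n₁ n₂) k = j := ⟨⟨j, hj⟩, rfl⟩
      have hwk : w (Fin.castLE (min_le_left n₁ n₂) k) = y (Fin.castLE (min_le_right n₁ n₂) k) :=
        dif_pos (k.isLt.trans_le (min_le_right n₁ n₂))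
      rw [mul_rectDiag_apply_castLE, ← hwk, hb']
      simp [V, Λ, hwk, Module.Basis.toMatrix_apply, mul_comm]
    · rw [mul_rectDiag_apply_of_le _ _ _ (not_lt.mp hj)]
      by_contra hyj
      exact hj (lt_min (hy j fun h => hyj (by rw [h]; rfl)) j.isLt)
  refine ⟨V, Λ, U, isSVD_iff.mpr ⟨hV, hU, fun k => norm_nonneg _, ?_⟩⟩
  calc X = X * U * Uᵀ := by
        rw [Matrix.mul_assoc, (mem_orthogonalGroup_iff _ ℝ).mp hU, Matrix.mul_one]
    _ = V * rectDiag Λ * Uᵀ := by rw [hXU]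

end SVD

theorem apply_rectDiag_eq {n₁ n₂ : ℕ} {φ : (Fin (min n₁ n₂) → ℝ) → EReal}
    (habs : ∀ Λ : Fin (min n₁ n₂) → ℝ, φ (fun i => |Λ i|) = φ Λ)
    {J : Matrix (Fin n₁) (Fin n₂) ℝ → EReal} (hJ : ∀ X V Λ U, IsSVD X V Λ U → J X = φ Λ)
    (Θ : Fin (min n₁ n₂) → ℝ) : J (rectDiag Θ) = φ Θ := by
  set d : Fin n₁ → ℝ := fun r =>
    if h : (r : ℕ) < min n₁ n₂ then (if Θ ⟨r, h⟩ < 0 then -1 else 1) else 1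
  have hd : diagonal d ∈ orthogonalGroup (Fin n₁) ℝ := by
    rw [mem_orthogonalGroup_iff, diagonal_transpose, diagonal_mul_diagonal, ← diagonal_one]
    congr 1 with r
    simp only [d]
    split_ifs <;> norm_num
  have hΘ : rectDiag Θ =
      diagonal d * rectDiag (fun k => |Θ k|) * (1 : Matrix (Fin n₂) (Fin n₂) ℝ)ᵀ := by
    rw [Matrix.transpose_one, Matrix.mul_one, diagonal_mul_rectDiag]
    congr 1 with k
    simp only [d, Fin.val_castLE, k.isLt, dif_pos]
    split_ifs with hk
    · rw [abs_of_neg hk, neg_one_mul, neg_neg]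
    · rw [abs_of_nonneg (not_lt.mp hk), one_mul]
  rw [hJ _ _ _ _ (isSVD_iff.mpr ⟨hd, one_mem _, fun k => abs_nonneg _, hΘ⟩), habs]

theorem spectral_function_convex_iff {n₁ n₂ : ℕ}
    (φ : (Fin (min n₁ n₂) → ℝ) → EReal)
    (hsym : ∀ (σ : Equiv.Perm (Fin (min n₁ n₂))) (Λ : Fin (min n₁ n₂) → ℝ),
      φ (fun i => Λ (σ i)) = φ Λ)
    (habs : ∀ Λ : Fin (min n₁ n₂) → ℝ, φ (fun i => |Λ i|) = φ Λ)
    (J : Matrix (Fin n₁) (Fin n₂) ℝ → EReal)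
    (hJ : ∀ X V Λ U, IsSVD X V Λ U → J X = φ Λ) :
    ERealConvex J ↔ ERealConvex φ := by
  constructor
  · intro hJc Θ Θ' a b ha hb hab
    rw [← apply_rectDiag_eq habs hJ, ← apply_rectDiag_eq habs hJ Θ,
      ← apply_rectDiag_eq habs hJ Θ', rectDiag_add_smul]
    exact hJc _ _ a b ha hb hab
  · intro hφ X Y a b ha hb hab
    obtain ⟨W, τ, T, hZ⟩ := exists_isSVD (a • X + b • Y)
    obtain ⟨V₁, Λ₁, U₁, hX⟩ := exists_isSVD X
    obtain ⟨V₂, Λ₂, U₂, hY⟩ := exists_isSVD Y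
    rw [hJ _ _ _ _ hZ, hJ _ _ _ _ hX, hJ _ _ _ _ hY]
    have hτ : τ = a • rectDiagEntries (Wᵀ * X * T) + b • rectDiagEntries (Wᵀ * Y * T) := by
      rw [← hZ.rectDiagEntries_transpose_mul_mul, Matrix.mul_add, Matrix.add_mul,
        Matrix.mul_smul, Matrix.smul_mul, Matrix.mul_smul, Matrix.smul_mul]
      rfl
    obtain ⟨hW, hT, -⟩ := isSVD_iff.mp hZ
    calc φ τ ≤ a * φ (rectDiagEntries (Wᵀ * X * T)) + b * φ (rectDiagEntries (Wᵀ * Y * T)) :=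
          hτ ▸ hφ _ _ a b ha hb hab
      _ ≤ a * φ Λ₁ + b * φ Λ₂ := add_le_add
          (mul_le_mul_of_nonneg_left (hφ.apply_rectDiagEntries_transpose_mul_mul_le hsym habs
            hX hW hT) (EReal.coe_nonneg.mpr ha))
          (mul_le_mul_of_nonneg_left (hφ.apply_rectDiagEntries_transpose_mul_mul_le hsym habs
            hY hW hT) (EReal.coe_nonneg.mpr hb))
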